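/- arXiv:2301.07869 — 3 statements merged into one kernel-verified Lean document; each statement's English description precedes it below -/
import Mathlib

section
/- For all integers n ≥ 1 and r ≥ 0, the multisets A_{n,r} and B_{n,r} are equal; that is, the multiset {n − i − j : 0 ≤ i ≤ n, 0 ≤ j ≤ n + r} of integers (counted with multiplicity) equals the multiset {m − l : 0 ≤ m ≤ n, 0 ≤ l ≤ 2m + r}. -/
lemma count_range' (k m : ℕ) :
    Multiset.count m (Multiset.range k) = if m < k then 1 else 0 := by
  simp [Multiset.count_eq_of_nodup (Multiset.nodup_range k)]

lemma count_map_sub (c : ℤ) (k : ℕ) (z : ℤ) :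
    Multiset.count z ((Multiset.range k).map fun l : ℕ => c - (l : ℤ))
      = if c - k < z ∧ z ≤ c then 1 else 0 := by
  have hinj : Function.Injective (fun l : ℕ => c - (l : ℤ)) := by
    intro a b h; simp only at h; omega
  by_cases h : c - k < z ∧ z ≤ c
  · have hz : z = c - ((c - z).toNat : ℤ) := by omega
    rw [if_pos h, hz, Multiset.count_map_eq_count' _ _ hinj, count_range',
      if_pos (by omega)]
  · rw [if_neg h, Multiset.count_eq_zero]
    simp only [Multiset.mem_map, Multiset.mem_range]
    rintro ⟨l, hl, rfl⟩
    omega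

lemma card_filter_range (N : ℕ) (a b : ℤ) :
    ((Finset.range N).filter (fun i : ℕ => a ≤ (i : ℤ) ∧ (i : ℤ) ≤ b)).card
      = (min b ((N : ℤ) - 1) + 1 - max a 0).toNat := by
  induction N with
  | zero => simp; omega
  | succ N ih =>
    rw [Finset.range_add_one, Finset.filter_insert]
    by_cases h : a ≤ (N : ℤ) ∧ (N : ℤ) ≤ b
    · rw [if_pos h, Finset.card_insert_of_notMem (by simp), ih]
      push_cast
      omega
    · rw [if_neg h, ih]
      push_cast
      omega

/-- For integers `n ≥ 1`, `r ≥ 0`, the multiset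
`A_{n,r} = {n − i − j : 0 ≤ i ≤ n, 0 ≤ j ≤ n + r}` equals the multiset
`B_{n,r} = {m − l : 0 ≤ m ≤ n, 0 ≤ l ≤ 2m + r}` (elements counted with multiplicity). -/
theorem siegel_multiset_A_eq_B (n r : ℕ) (hn : 1 ≤ n) :
    ((Multiset.range (n + 1)).bind fun i =>
      (Multiset.range (n + r + 1)).map fun j => (n : ℤ) - (i : ℤ) - (j : ℤ))
    = ((Multiset.range (n + 1)).bind fun m =>
      (Multiset.range (2 * m + r + 1)).map fun l => (m : ℤ) - (l : ℤ)) := by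
  simp only [bind_pure_comp, Multiset.fmap_def, Multiset.map_map]
  ext z
  rw [Multiset.count_bind, Multiset.count_bind]
  have hA : ∀ i : ℕ,
      Multiset.count z ((Multiset.range (n + r + 1)).map fun j : ℕ => (n : ℤ) - (i : ℤ) - (j : ℤ))
        = if ((n : ℤ) - i) - (n + r + 1) < z ∧ z ≤ (n : ℤ) - i then 1 else 0 := by
    intro i
    have := count_map_sub ((n : ℤ) - i) (n + r + 1) z
    simpa [sub_sub] using this
  have hB : ∀ m : ℕ,
      Multiset.count z ((Multiset.range (2 * m + r + 1)).map fun l : ℕ => (m : ℤ) - (l : ℤ))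
        = if (m : ℤ) - (2 * m + r + 1) < z ∧ z ≤ (m : ℤ) then 1 else 0 := by
    intro m
    have := count_map_sub (m : ℤ) (2 * m + r + 1) z
    simpa using this
  calc (Multiset.map (fun i : ℕ => Multiset.count z
          ((Multiset.range (n + r + 1)).map fun j : ℕ => (n : ℤ) - (i : ℤ) - (j : ℤ)))
          (Multiset.range (n + 1))).sum
      = ∑ i ∈ Finset.range (n + 1),
          if ((n : ℤ) - i) - (n + r + 1) < z ∧ z ≤ (n : ℤ) - i then 1 else 0 := by
        rw [Finset.sum]
        congr 1
        rw [Finset.range_val]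
        exact Multiset.map_congr rfl (fun i _ => hA i)
    _ = ((Finset.range (n + 1)).filter
          (fun i : ℕ => (n : ℤ) - z - (n + r) ≤ (i : ℤ) ∧ (i : ℤ) ≤ (n : ℤ) - z)).card := by
        rw [Finset.card_filter]
        apply Finset.sum_congr rfl
        intro i _
        congr 1
        simp only [eq_iff_iff]
        constructor <;> intro h <;> [skip; skip] <;> push_cast at * <;> omega
    _ = ((Finset.range (n + 1)).filter
          (fun m : ℕ => max z ((- z) - r) ≤ (m : ℤ) ∧ (m : ℤ) ≤ (n : ℤ))).card := by
        rw [card_filter_range, card_filter_range]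
        push_cast
        omega
    _ = ∑ m ∈ Finset.range (n + 1),
          if (m : ℤ) - (2 * m + r + 1) < z ∧ z ≤ (m : ℤ) then 1 else 0 := by
        rw [Finset.card_filter]
        apply Finset.sum_congr rfl
        intro m hm
        simp only [Finset.mem_range] at hm
        congr 1
        simp only [eq_iff_iff]
        constructor <;> intro h <;> push_cast at * <;> omega
    _ = (Multiset.map (fun m : ℕ => Multiset.count z
          ((Multiset.range (2 * m + r + 1)).map fun l : ℕ => (m : ℤ) - (l : ℤ)))
          (Multiset.range (n + 1))).sum := by
        rw [Finset.sum]
        congr 1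
        rw [Finset.range_val]
        exact Multiset.map_congr rfl (fun m _ => (hB m).symm)
end

section
/- For all integers n ≥ 1 and r ≥ 0, the multiset B_{n+1,r} equals the disjoint multiset union of (B_{n,r} + 1) (i.e., every element of B_{n,r} shifted up by 1), the multiset {−m − r : 0 ≤ m ≤ n} ∪ {−m − r − 1 : 0 ≤ m ≤ n}, and the multiset {−l : 0 ≤ l ≤ r}; equivalently, B_{n+1,r} is the disjoint union of (B_{n,r} + 1) with the multiset containing each of 0, −1, …, −r + 1 once, each of −r, −r−1, …, −n−r twice, and −n−r−1 once. -/
/-- The multiset `B_{n,r} = {m − l : 0 ≤ m ≤ n, 0 ≤ l ≤ 2m + r}`. -/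
def multisetB (n r : ℕ) : Multiset ℤ :=
  (Multiset.range (n + 1)).bind fun m =>
    (Multiset.range (2 * m + r + 1)).map fun l => (m : ℤ) - (l : ℤ)

/-!
Split `B_{n+1,r}` into its rows `{m − l : 0 ≤ l ≤ 2m + r}`, `0 ≤ m ≤ n + 1`. Row `0` is
`{−l : 0 ≤ l ≤ r}`, and row `m + 1` is row `m` shifted up by one together with its two smallest
entries `−m − r` and `−m − r − 1`. Hence `B_{n+1,r}` is `B_{n,r} + 1` plus these new entries.
-/

open Multiset

/- In `multisetB` and in the theorem, `Multiset.range k` is coerced to `Multiset ℤ`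
through the monad lift `s >>= pure ∘ Nat.cast`; this turns that lift into a plain `map`. -/
theorem Multiset.natCast_coe_eq_map {R : Type} [NatCast R] (s : Multiset ℕ) :
    (↑s : Multiset R) = s.map (↑) := by
  simp [pure_def, bind_def]

theorem Multiset.range_succ_eq_zero_cons (n : ℕ) : range (n + 1) = 0 ::ₘ (range n).map (· + 1) := by
  rw [add_comm, range_add]
  simp [add_comm]

/-- Both sides are `(range (n + 1)).map f`, peeled at the bottom and at the top. -/
theorem Multiset.cons_map_range_succ {α : Type*} (f : ℕ → α) (n : ℕ) :
    f 0 ::ₘ (range n).map (fun m => f (m + 1)) = f n ::ₘ (range n).map f := by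
  rw [← map_cons f n, ← range_succ, range_succ_eq_zero_cons, map_cons, map_map]
  rfl

def rowB (m r : ℕ) : Multiset ℤ :=
  (range (2 * m + r + 1)).map fun l : ℕ => (m : ℤ) - l

theorem multisetB_eq_bind_rowB (n r : ℕ) : multisetB n r = (range (n + 1)).bind (rowB · r) := by
  simp only [multisetB, rowB, natCast_coe_eq_map, map_map, Function.comp_def]

theorem rowB_zero (r : ℕ) : rowB 0 r = (range (r + 1)).map fun l : ℕ => -(l : ℤ) := by
  simp [rowB]

theorem rowB_succ (m r : ℕ) :
    rowB (m + 1) r = (-(m : ℤ) - r - 1) ::ₘ (-(m : ℤ) - r) ::ₘ (rowB m r).map (· + 1) := by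
  have hlen : 2 * (m + 1) + r + 1 = 2 * m + r + 1 + 1 + 1 := by ring
  rw [rowB, rowB, hlen, range_succ, range_succ, map_cons, map_cons, map_map]
  refine congr_arg₂ _ (by push_cast; ring) (congr_arg₂ _ (by push_cast; ring) ?_)
  exact map_congr rfl fun l _ => by simp only [Function.comp_apply]; push_cast; ring

theorem multisetB_succ (n r : ℕ) :
    multisetB (n + 1) r = (multisetB n r).map (· + 1)
      + ((range (n + 1)).map fun m : ℕ => -(m : ℤ) - r)
      + ((range (n + 1)).map fun m : ℕ => -(m : ℤ) - r - 1)
      + (range (r + 1)).map fun l : ℕ => -(l : ℤ) := by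
  rw [multisetB_eq_bind_rowB, multisetB_eq_bind_rowB, range_succ_eq_zero_cons (n + 1), cons_bind,
    bind_map, rowB_zero, bind_congr fun m _ => rowB_succ m r, bind_cons, bind_cons, map_bind]
  abel

/-- Both sides are `{-l : l < r} + {-m - r : m ≤ n + 1}`. -/
theorem map_range_neg_sub_one_add_map_range_neg (n r : ℕ) :
    ((range (n + 1)).map fun m : ℕ => -(m : ℤ) - r - 1)
        + (range (r + 1)).map (fun l : ℕ => -(l : ℤ)) =
      (range r).map (fun l : ℕ => -(l : ℤ)) + ((range (n + 1)).map fun m : ℕ => -(m : ℤ) - r)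
        + {-(n : ℤ) - r - 1} := by
  have hshift : (-(r : ℤ)) ::ₘ (range (n + 1)).map (fun m : ℕ => -(m : ℤ) - r - 1)
      = (-(n : ℤ) - r - 1) ::ₘ (range (n + 1)).map (fun m : ℕ => -(m : ℤ) - r) := by
    convert cons_map_range_succ (fun m : ℕ => -(m : ℤ) - r) (n + 1) using 2
    · simp
    · exact map_congr rfl fun m _ => by push_cast; ring
    · push_cast; ring
  rw [range_succ r, map_cons, add_cons, ← cons_add, hshift, ← singleton_add]
  abel

theorem siegel_multiset_B_inductive_step_general (n r : ℕ) :
    (multisetB (n + 1) r = (multisetB n r).map (· + 1)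
        + (((Multiset.range (n + 1)).map fun m => -(m : ℤ) - (r : ℤ))
            + ((Multiset.range (n + 1)).map fun m => -(m : ℤ) - (r : ℤ) - 1))
        + ((Multiset.range (r + 1)).map fun l => -(l : ℤ)))
    ∧ (multisetB (n + 1) r = (multisetB n r).map (· + 1)
        + ((Multiset.range r).map fun l => -(l : ℤ))
        + ((Multiset.range (n + 1)).map fun m => -(m : ℤ) - (r : ℤ))
        + ((Multiset.range (n + 1)).map fun m => -(m : ℤ) - (r : ℤ))
        + ({-(n : ℤ) - (r : ℤ) - 1} : Multiset ℤ)) := by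
  simp only [natCast_coe_eq_map, map_map, Function.comp_def]
  refine ⟨by rw [multisetB_succ]; abel, ?_⟩
  rw [multisetB_succ, add_assoc _ _ ((range (r + 1)).map _),
    map_range_neg_sub_one_add_map_range_neg]
  abel

/-- For `n ≥ 1`, `r ≥ 0`: `B_{n+1,r}` is the disjoint multiset union of `B_{n,r} + 1`,
`{−m − r : 0 ≤ m ≤ n} ∪ {−m − r − 1 : 0 ≤ m ≤ n}` and `{−l : 0 ≤ l ≤ r}`; equivalently,
it is the disjoint union of `B_{n,r} + 1` with the multiset containing each of
`0, −1, …, −r + 1` once, each of `−r, −r−1, …, −n−r` twice, and `−n−r−1` once. -/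
theorem siegel_multiset_B_inductive_step (n r : ℕ) (hn : 1 ≤ n) :
    (multisetB (n + 1) r = (multisetB n r).map (· + 1)
        + (((Multiset.range (n + 1)).map fun m => -(m : ℤ) - (r : ℤ))
            + ((Multiset.range (n + 1)).map fun m => -(m : ℤ) - (r : ℤ) - 1))
        + ((Multiset.range (r + 1)).map fun l => -(l : ℤ)))
    ∧ (multisetB (n + 1) r = (multisetB n r).map (· + 1)
        + ((Multiset.range r).map fun l => -(l : ℤ))
        + ((Multiset.range (n + 1)).map fun m => -(m : ℤ) - (r : ℤ))
        + ((Multiset.range (n + 1)).map fun m => -(m : ℤ) - (r : ℤ))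
        + ({-(n : ℤ) - (r : ℤ) - 1} : Multiset ℤ)) :=
  siegel_multiset_B_inductive_step_general n r
end

section
/- Let r ≥ 1 be an integer and let x > 0 be a real number with x ≠ 1. Then (1/(2π)) ∫_{−∞}^{∞} x^{2+it} / ((2+it)(3+it)⋯(2+r+it)) dt equals (1/r!)(1 − 1/x)^{r} if x > 1, and equals 0 if 0 < x < 1. Here x^{2+it} = e^{(2+it)·log x} with the real logarithm of x, and the denominator is ∏_{j=0}^{r} (2 + j + it). The integral is the contour integral (1/(2πi)) ∫_{(2)} x^{s}/(s(s+1)⋯(s+r)) ds over the vertical line Re(s) = 2. -/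
/-!
The integrand is `x^s / (s(s+1)⋯(s+r))` on the line `Re s = 2`, i.e. the inverse Mellin transform
of `1 / (s(s+1)⋯(s+r))` evaluated at `1/x`. By the Beta integral this is the Mellin transform of
the Riesz weight `u ↦ (1 - u)₊^r / r!`. For `r ≥ 1` the weight is continuous and its Mellin
transform is `O(|s|⁻²)` on vertical lines, so Mellin inversion returns the weight at `1/x`.
-/

open MeasureTheory Complex Set
open scoped Nat

noncomputable def rieszWeight (r : ℕ) : ℝ → ℂ :=
  (Iio 1).indicator fun u => (r ! : ℂ)⁻¹ * (1 - (u : ℂ)) ^ r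

lemma rieszWeight_eq_max_pow {r : ℕ} (hr : r ≠ 0) (u : ℝ) :
    rieszWeight r u = (r ! : ℂ)⁻¹ * ((max (1 - u) 0 : ℝ) : ℂ) ^ r := by
  rcases lt_or_ge u 1 with hu | hu
  · simp [rieszWeight, hu, max_eq_left (sub_nonneg.2 hu.le)]
  · simp [rieszWeight, not_lt.2 hu, max_eq_right (sub_nonpos.2 hu), hr]

lemma continuous_rieszWeight {r : ℕ} (hr : r ≠ 0) : Continuous (rieszWeight r) := by
  rw [funext (rieszWeight_eq_max_pow hr)]
  fun_prop

/-- The exponent `(r + 1) - 1` matches the integrand of `betaIntegral s (r + 1)`. -/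
lemma cpow_smul_rieszWeight (r : ℕ) (s : ℂ) :
    (fun t : ℝ => (t : ℂ) ^ (s - 1) • rieszWeight r t) = (Iio 1).indicator
      fun t : ℝ => (r ! : ℂ)⁻¹ * ((t : ℂ) ^ (s - 1) * (1 - (t : ℂ)) ^ ((r + 1 : ℂ) - 1)) := by
  ext t
  by_cases ht : t < 1
  · simp [rieszWeight, ht]
    ring
  · simp [rieszWeight, ht]

lemma mellinConvergent_rieszWeight (r : ℕ) {s : ℂ} (hs : 0 < s.re) :
    MellinConvergent (rieszWeight r) s := by
  rw [MellinConvergent, cpow_smul_rieszWeight, integrableOn_indicator_iff measurableSet_Iio,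
    inter_comm, Ioi_inter_Iio]
  have hbeta := (betaIntegral_convergent hs (v := r + 1) (by simp; positivity)).1
  exact (hbeta.mono_set Ioo_subset_Ioc_self).const_mul _

lemma mellin_rieszWeight (r : ℕ) {s : ℂ} (hs : 0 < s.re) :
    mellin (rieszWeight r) s = 1 / ∏ j ∈ Finset.range (r + 1), (s + j) := by
  rw [mellin, cpow_smul_rieszWeight, setIntegral_indicator measurableSet_Iio, Ioi_inter_Iio,
    integral_const_mul, ← integral_Ioc_eq_integral_Ioo,
    ← intervalIntegral.integral_of_le zero_le_one, ← betaIntegral,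
    betaIntegral_eval_nat_add_one_right hs, ← mul_div_assoc,
    inv_mul_cancel₀ (Nat.cast_ne_zero.2 r.factorial_ne_zero)]

lemma norm_le_norm_add_one {s : ℂ} (hs : 0 ≤ s.re) : ‖s‖ ≤ ‖s + 1‖ := by
  rw [← sq_le_sq₀ (norm_nonneg _) (norm_nonneg _), Complex.sq_norm, Complex.sq_norm,
    normSq_apply, normSq_apply]
  simp only [add_re, one_re, add_im, one_im, add_zero]
  nlinarith

lemma one_le_norm_add_natCast {s : ℂ} (hs : 0 ≤ s.re) {j : ℕ} (hj : 1 ≤ j) :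
    1 ≤ ‖s + j‖ :=
  calc (1 : ℝ) ≤ (s + j).re := by simp; linarith [(by exact_mod_cast hj : (1 : ℝ) ≤ j)]
    _ ≤ ‖s + j‖ := re_le_norm _

lemma sq_norm_le_norm_prod_add_natCast {s : ℂ} (hs : 0 ≤ s.re) {r : ℕ} (hr : 1 ≤ r) :
    ‖s‖ ^ 2 ≤ ‖∏ j ∈ Finset.range (r + 1), (s + j)‖ := by
  induction r, hr using Nat.le_induction with
  | base =>
    simpa [Finset.prod_range_succ, sq] using
      mul_le_mul_of_nonneg_left (norm_le_norm_add_one hs) (norm_nonneg s)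
  | succ r hr ih =>
    rw [Finset.prod_range_succ, norm_mul]
    exact ih.trans (le_mul_of_one_le_right (norm_nonneg _) (one_le_norm_add_natCast hs (by omega)))

lemma verticalIntegrable_one_div_prod_add_natCast {σ : ℝ} (hσ : 0 < σ) {r : ℕ}
    (hr : 1 ≤ r) :
    VerticalIntegrable (fun s => 1 / ∏ j ∈ Finset.range (r + 1), (s + j)) σ := by
  have hdom : Integrable fun t : ℝ => σ⁻¹ ^ 2 * (1 + (t / σ) ^ 2)⁻¹ :=
    (integrable_inv_one_add_sq.comp_div hσ.ne').const_mul _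
  refine hdom.mono' (Measurable.aestronglyMeasurable (by fun_prop)) (ae_of_all _ fun t => ?_)
  have hs : ‖(σ : ℂ) + t * I‖ ^ 2 = σ ^ 2 + t ^ 2 := by
    rw [Complex.sq_norm, normSq_add_mul_I]
  have hpos : 0 < ‖(σ : ℂ) + t * I‖ ^ 2 := by rw [hs]; positivity
  calc ‖1 / ∏ j ∈ Finset.range (r + 1), ((σ : ℂ) + t * I + j)‖
      ≤ 1 / ‖(σ : ℂ) + t * I‖ ^ 2 := by
        rw [norm_div, norm_one]
        exact one_div_le_one_div_of_le hpos
          (sq_norm_le_norm_prod_add_natCast (by simp [hσ.le]) hr)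
    _ = σ⁻¹ ^ 2 * (1 + (t / σ) ^ 2)⁻¹ := by
        rw [hs]
        field_simp

lemma ofReal_inv_cpow_neg {x : ℝ} (hx : 0 < x) (s : ℂ) :
    ((x⁻¹ : ℝ) : ℂ) ^ (-s) = exp (s * Real.log x) := by
  rw [cpow_def_of_ne_zero (by exact_mod_cast (inv_pos.2 hx).ne'), ← ofReal_log (inv_pos.2 hx).le,
    Real.log_inv, ofReal_neg]
  ring_nf

theorem perron_discontinuous_integral_general (r : ℕ) (hr : 1 ≤ r) (x : ℝ) (hx : 0 < x) :
    (1 / (2 * Real.pi) : ℂ) * ∫ t : ℝ,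
        Complex.exp (((2 : ℂ) + (t : ℂ) * Complex.I) * (Real.log x : ℂ)) /
          ∏ j ∈ Finset.range (r + 1), ((2 : ℂ) + (j : ℂ) + (t : ℂ) * Complex.I)
      = if 1 < x then ((1 / (Nat.factorial r) : ℂ) * (1 - 1 / (x : ℂ)) ^ r) else 0 := by
  have hmellin : ∀ t : ℝ, mellin (rieszWeight r) ((2 : ℝ) + t * I) =
      1 / ∏ j ∈ Finset.range (r + 1), ((2 : ℝ) + t * I + j) := fun t =>
    mellin_rieszWeight r (by simp)
  have hinv := mellinInv_mellin_eq 2 (rieszWeight r) (inv_pos.2 hx)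
    (mellinConvergent_rieszWeight r (by simp))
    ((verticalIntegrable_one_div_prod_add_natCast two_pos hr).congr
      (ae_of_all _ fun t => (hmellin t).symm))
    (continuous_rieszWeight (by omega)).continuousAt
  rw [mellinInv] at hinv
  simp only [hmellin, ofReal_inv_cpow_neg hx] at hinv
  convert hinv using 1
  · rw [real_smul]
    push_cast
    congr 2 with t
    rw [smul_eq_mul, mul_one_div]
    congr 2 with j
    ring
  · by_cases h : 1 < x
    · simp [rieszWeight, h, inv_lt_one_of_one_lt₀ h]
    · simp [rieszWeight, h, one_le_inv_iff₀.2 ⟨hx, not_lt.1 h⟩]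

/-- Discontinuous integral formula of Perron type: for an integer `r ≥ 1` and a real
`x > 0` with `x ≠ 1`,
`(1/(2π)) ∫_{−∞}^{∞} x^{2+it} / ((2+it)(3+it)⋯(2+r+it)) dt`
equals `(1/r!)(1 − 1/x)^r` if `x > 1` and `0` if `0 < x < 1`. Here
`x^{2+it} = exp((2+it) log x)` with the real logarithm of `x`. -/
theorem perron_discontinuous_integral (r : ℕ) (hr : 1 ≤ r) (x : ℝ) (hx : 0 < x)
    (hx1 : x ≠ 1) :
    (1 / (2 * Real.pi) : ℂ) * ∫ t : ℝ,
        Complex.exp (((2 : ℂ) + (t : ℂ) * Complex.I) * (Real.log x : ℂ)) /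
          ∏ j ∈ Finset.range (r + 1), ((2 : ℂ) + (j : ℂ) + (t : ℂ) * Complex.I)
      = if 1 < x then ((1 / (Nat.factorial r) : ℂ) * (1 - 1 / (x : ℂ)) ^ r) else 0 :=
  perron_discontinuous_integral_general r hr x hx
end
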